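/- For fixed constants 0 < π < 1, α, β ∈ (0,1), the function F(f) = (1/(1−β)) · ∫_{−z_{1−β}}^∞ Φ((1−π)(u + z_{1−α} + z_{1−β})/√(1/f − 1)) φ(u) du is strictly increasing in f on the interval (0,1), where Φ and φ are the standard normal CDF and density, and z_p = Φ⁻¹(p). -/

import Mathlib

/-!
Write `k = (1 - π) / √(1/f - 1)`, which increases strictly with `f`, and
`c = z_{1-α} + z_{1-β} > 0`. For `k₁ < k₂` the substitution `t = u + c` turns the difference
of the two integrals into `∫_{t > z_{1-α}} D(t) φ(t - c) dt` with `D(t) = Φ(k₂ t) - Φ(k₁ t)`.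
The function `D` is odd and positive for `t > 0`, while the weight `φ(t - c)` dominates its
reflection `φ(-t - c)` for `t ≥ 0`. So on a half-line starting at `-b < 0` the part over
`(-b, b)` is nonnegative after reflecting `(-b, 0)` onto `(0, b)`, and the tail over `(b, ∞)`
is positive.
-/

open MeasureTheory

/-- Standard normal density. -/
noncomputable def stdNormalPdf (t : ℝ) : ℝ :=
  (Real.sqrt (2 * Real.pi))⁻¹ * Real.exp (-(t ^ 2) / 2)

/-- Standard normal cumulative distribution function. -/
noncomputable def stdNormalCdf (x : ℝ) : ℝ := ∫ t in Set.Iic x, stdNormalPdf t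

open Set

lemma stdNormalPdf_eq_gaussianPDFReal : stdNormalPdf = ProbabilityTheory.gaussianPDFReal 0 1 := by
  ext t
  simp [stdNormalPdf, ProbabilityTheory.gaussianPDFReal]

lemma stdNormalPdf_pos (t : ℝ) : 0 < stdNormalPdf t := by
  unfold stdNormalPdf
  positivity

lemma integrable_stdNormalPdf : Integrable stdNormalPdf :=
  stdNormalPdf_eq_gaussianPDFReal ▸ ProbabilityTheory.integrable_gaussianPDFReal 0 1

lemma integral_stdNormalPdf : ∫ t, stdNormalPdf t = 1 :=
  stdNormalPdf_eq_gaussianPDFReal ▸ ProbabilityTheory.integral_gaussianPDFReal_eq_one 0 one_ne_zero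

lemma stdNormalPdf_neg (t : ℝ) : stdNormalPdf (-t) = stdNormalPdf t := by
  simp [stdNormalPdf]

lemma stdNormalPdf_le_of_abs_le {x y : ℝ} (h : |x| ≤ |y|) : stdNormalPdf y ≤ stdNormalPdf x := by
  unfold stdNormalPdf
  have := sq_le_sq.mpr h
  gcongr

lemma stdNormalCdf_sub_stdNormalCdf (a b : ℝ) :
    stdNormalCdf b - stdNormalCdf a = ∫ t in a..b, stdNormalPdf t :=
  intervalIntegral.integral_Iic_sub_Iic integrable_stdNormalPdf.integrableOn
    integrable_stdNormalPdf.integrableOn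

lemma stdNormalCdf_strictMono : StrictMono stdNormalCdf := fun a b hab => by
  rw [← sub_pos, stdNormalCdf_sub_stdNormalCdf]
  exact intervalIntegral.intervalIntegral_pos_of_pos integrable_stdNormalPdf.intervalIntegrable
    stdNormalPdf_pos hab

lemma measurable_stdNormalCdf : Measurable stdNormalCdf :=
  stdNormalCdf_strictMono.monotone.measurable

lemma stdNormalCdf_nonneg (x : ℝ) : 0 ≤ stdNormalCdf x :=
  setIntegral_nonneg measurableSet_Iic fun t _ => (stdNormalPdf_pos t).le

lemma stdNormalCdf_add_integral_Ioi (x : ℝ) :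
    stdNormalCdf x + ∫ t in Ioi x, stdNormalPdf t = 1 := by
  rw [stdNormalCdf, intervalIntegral.integral_Iic_add_Ioi integrable_stdNormalPdf.integrableOn
    integrable_stdNormalPdf.integrableOn, integral_stdNormalPdf]

lemma stdNormalCdf_le_one (x : ℝ) : stdNormalCdf x ≤ 1 := by
  have := setIntegral_nonneg (μ := volume) (measurableSet_Ioi (a := x))
    fun t _ => (stdNormalPdf_pos t).le
  linarith [stdNormalCdf_add_integral_Ioi x]

lemma stdNormalCdf_neg (x : ℝ) : stdNormalCdf (-x) = 1 - stdNormalCdf x := by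
  have h : ∫ t in Ioi (-x), stdNormalPdf t = stdNormalCdf x := by
    rw [← integral_comp_neg_Iic, stdNormalCdf]
    simp only [stdNormalPdf_neg]
  linarith [stdNormalCdf_add_integral_Ioi (-x)]

lemma integrable_stdNormalCdf_mul_stdNormalPdf_sub (k c : ℝ) :
    Integrable fun t => stdNormalCdf (k * t) * stdNormalPdf (t - c) :=
  (integrable_stdNormalPdf.comp_sub_right c).bdd_mul
    (measurable_stdNormalCdf.comp (measurable_const_mul k)).aestronglyMeasurable
    (ae_of_all _ fun t => by
      rw [Real.norm_of_nonneg (stdNormalCdf_nonneg _)]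
      exact stdNormalCdf_le_one _)

lemma integral_Ioi_comp_add_right {E : Type*} [NormedAddCommGroup E] [NormedSpace ℝ E]
    (g : ℝ → E) (a c : ℝ) : ∫ u in Ioi a, g (u + c) = ∫ t in Ioi (a + c), g t := by
  have := (measurePreserving_add_right volume c).setIntegral_preimage_emb
    (measurableEmbedding_addRight c) g (Ioi (a + c))
  rwa [preimage_add_const_Ioi, add_sub_cancel_right] at this

lemma setIntegral_pos_of_pos {X : Type*} [MeasurableSpace X] {μ : Measure X} {s : Set X}
    {f : X → ℝ} (hs : MeasurableSet s) (hμs : μ s ≠ 0) (hf : ∀ x ∈ s, 0 < f x)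
    (hfi : IntegrableOn f s μ) : 0 < ∫ x in s, f x ∂μ := by
  rw [setIntegral_pos_iff_support_of_nonneg_ae
    ((ae_restrict_iff' hs).mpr (ae_of_all _ fun x hx => (hf x hx).le)) hfi,
    inter_eq_right.mpr fun x hx => Function.mem_support.mpr (hf x hx).ne']
  exact pos_iff_ne_zero.mpr hμs

theorem integral_Ioi_odd_mul_pos {D w : ℝ → ℝ} (hD_odd : ∀ t, D (-t) = -D t)
    (hD_pos : ∀ t, 0 < t → 0 < D t) (hw_pos : ∀ t, 0 < w t) (hw : ∀ t, 0 ≤ t → w (-t) ≤ w t)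
    (hint : Integrable fun t => D t * w t) (s : ℝ) : 0 < ∫ t in Ioi s, D t * w t := by
  have tail_pos : ∀ b, 0 ≤ b → 0 < ∫ t in Ioi b, D t * w t := fun b hb =>
    setIntegral_pos_of_pos measurableSet_Ioi (by simp)
      (fun t ht => mul_pos (hD_pos t (hb.trans_lt ht)) (hw_pos t)) hint.integrableOn
  rcases le_or_gt 0 s with hs | hs
  · exact tail_pos s hs
  have hD_nonneg : ∀ t, 0 ≤ t → 0 ≤ D t := fun t ht => by
    rcases ht.eq_or_lt with rfl | ht
    · linarith [neg_zero (G := ℝ) ▸ hD_odd 0]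
    · exact (hD_pos t ht).le
  have hreflect : ∫ t in s..-s, D t * w t = ∫ t in 0..-s, (D (-t) * w (-t) + D t * w t) := by
    rw [← intervalIntegral.integral_add_adjacent_intervals (b := 0) hint.intervalIntegrable
      hint.intervalIntegrable, intervalIntegral.integral_add hint.comp_neg.intervalIntegrable
      hint.intervalIntegrable, intervalIntegral.integral_comp_neg fun t => D t * w t, neg_neg,
      neg_zero]
  have hsymm : 0 ≤ ∫ t in s..-s, D t * w t := by
    rw [hreflect]
    refine intervalIntegral.integral_nonneg (by linarith) fun t ht => ?_
    have := mul_le_mul_of_nonneg_left (hw t ht.1) (hD_nonneg t ht.1)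
    rw [hD_odd]
    linarith
  rw [← intervalIntegral.integral_interval_add_Ioi hint.integrableOn hint.integrableOn]
  linarith [tail_pos (-s) (by linarith)]

theorem strictMono_integral_Ioi_stdNormalCdf_mul_add {c : ℝ} (hc : 0 ≤ c) (a : ℝ) :
    StrictMono fun k => ∫ u in Ioi a, stdNormalCdf (k * (u + c)) * stdNormalPdf u := by
  intro k₁ k₂ hk
  have hshift : ∀ k, ∫ u in Ioi a, stdNormalCdf (k * (u + c)) * stdNormalPdf u =
      ∫ t in Ioi (a + c), stdNormalCdf (k * t) * stdNormalPdf (t - c) := fun k => by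
    simpa using
      integral_Ioi_comp_add_right (fun t => stdNormalCdf (k * t) * stdNormalPdf (t - c)) a c
  simp only [hshift]
  rw [← sub_pos, ← integral_sub (integrable_stdNormalCdf_mul_stdNormalPdf_sub k₂ c).integrableOn
    (integrable_stdNormalCdf_mul_stdNormalPdf_sub k₁ c).integrableOn]
  simp only [← sub_mul]
  have hD_odd : ∀ t, stdNormalCdf (k₂ * -t) - stdNormalCdf (k₁ * -t) =
      -(stdNormalCdf (k₂ * t) - stdNormalCdf (k₁ * t)) := fun t => by
    simp only [mul_neg, stdNormalCdf_neg]
    ring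
  have hD_pos : ∀ t, 0 < t → 0 < stdNormalCdf (k₂ * t) - stdNormalCdf (k₁ * t) := fun t ht =>
    sub_pos.mpr (stdNormalCdf_strictMono (mul_lt_mul_of_pos_right hk ht))
  have hw : ∀ t, 0 ≤ t → stdNormalPdf (-t - c) ≤ stdNormalPdf (t - c) := fun t ht => by
    apply stdNormalPdf_le_of_abs_le
    rw [abs_of_nonpos (by linarith : -t - c ≤ 0), abs_le]
    constructor <;> linarith
  have hint : Integrable fun t =>
      (stdNormalCdf (k₂ * t) - stdNormalCdf (k₁ * t)) * stdNormalPdf (t - c) := by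
    simpa only [sub_mul, Pi.sub_def] using (integrable_stdNormalCdf_mul_stdNormalPdf_sub k₂ c).sub
      (integrable_stdNormalCdf_mul_stdNormalPdf_sub k₁ c)
  exact integral_Ioi_odd_mul_pos hD_odd hD_pos (fun t => stdNormalPdf_pos _) hw hint _

lemma strictMonoOn_div_sqrt_one_div_sub_one {a : ℝ} (ha : 0 < a) :
    StrictMonoOn (fun f : ℝ => a / √(1 / f - 1)) (Ioo 0 1) := by
  intro f hf g hg hfg
  have hg' : 0 < 1 / g - 1 := sub_pos.mpr (one_lt_one_div hg.1 hg.2)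
  refine div_lt_div_of_pos_left ha (Real.sqrt_pos.mpr hg') (Real.sqrt_lt_sqrt hg'.le ?_)
  linarith [one_div_lt_one_div_of_lt hf.1 hfg]

theorem stmt3_general (π β zα zβ : ℝ)
    (hπ : π ∈ Set.Ioo (0 : ℝ) 1) (hβ : β ∈ Set.Ioo (0 : ℝ) 1)
    (hz : 0 < zα + zβ) :
    StrictMonoOn (fun f : ℝ =>
      (1 / (1 - β)) * ∫ u in Set.Ioi (-zβ),
        stdNormalCdf ((1 - π) * (u + zα + zβ) / Real.sqrt (1 / f - 1)) * stdNormalPdf u)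
      (Set.Ioo 0 1) := by
  have hk := strictMonoOn_div_sqrt_one_div_sub_one (sub_pos.mpr hπ.2)
  have hG := strictMono_integral_Ioi_stdNormalCdf_mul_add hz.le (-zβ)
  intro f hf g hg hfg
  simp only [mul_div_right_comm, add_assoc]
  exact mul_lt_mul_of_pos_left (hG (hk hf hg hfg)) (one_div_pos.mpr (sub_pos.mpr hβ.2))

/-- The consistency probability of criterion I,
`F(f) = (1/(1-β)) ∫_{-z_{1-β}}^∞ Φ((1-π)(u + z_{1-α} + z_{1-β})/√(1/f - 1)) φ(u) du`,
is strictly increasing in `f` on `(0, 1)`. -/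
theorem stmt3 (π α β zα zβ : ℝ)
    (hπ : π ∈ Set.Ioo (0 : ℝ) 1) (hα : α ∈ Set.Ioo (0 : ℝ) 1) (hβ : β ∈ Set.Ioo (0 : ℝ) 1)
    (hzα : stdNormalCdf zα = 1 - α) (hzβ : stdNormalCdf zβ = 1 - β)
    (hz : 0 < zα + zβ) :
    StrictMonoOn (fun f : ℝ =>
      (1 / (1 - β)) * ∫ u in Set.Ioi (-zβ),
        stdNormalCdf ((1 - π) * (u + zα + zβ) / Real.sqrt (1 / f - 1)) * stdNormalPdf u)
      (Set.Ioo 0 1) :=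
  stmt3_general π β zα zβ hπ hβ hz
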